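/- Partial fraction decomposition: for each n ≥ 1, aₙ = Γ(n)Γ(n-x)Γ(1-x-z)Γ(1-x+z)/(Γ(1-x)Γ(1-x-z+n)Γ(1-x+z+n)) equals Σ_{l=1}^n (A_{n,l}^{(+)}/(x+z-l) + A_{n,l}^{(-)}/(x-z-l)), where A_{n,l}^{(±)} = (-1)^l C(n-1,l-1)·∏_{j=1}^{n-1}(±z-l+j)/∏_{j=1}^{n}(±2z-l+j). -/

import Mathlib

open Complex

/-- The coefficient `aₙ = Γ(n)Γ(n-x)Γ(1-x-z)Γ(1-x+z)/(Γ(1-x)Γ(1-x-z+n)Γ(1-x+z+n))`. -/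
noncomputable def aCoef (x z : ℂ) (n : ℕ) : ℂ :=
  Gamma n * Gamma (n - x) * Gamma (1 - x - z) * Gamma (1 - x + z) /
    (Gamma (1 - x) * Gamma (1 - x - z + n) * Gamma (1 - x + z + n))

/-- `A_{n,l}^{(±)} = (-1)^l C(n-1,l-1) ∏_{j=1}^{n-1}(±z-l+j) / ∏_{j=1}^{n}(±2z-l+j)`;
the `+` case is `APm z n l`, the `-` case is `APm (-z) n l`. -/
noncomputable def APm (z : ℂ) (n l : ℕ) : ℂ :=
  (-1) ^ l * ((n - 1).choose (l - 1) : ℂ) *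
    (∏ j ∈ Finset.range (n - 1), (z - l + (j + 1))) /
    (∏ j ∈ Finset.range n, (2 * z - l + (j + 1)))

section Aux
open Polynomial Finset

lemma prod_Icc_eq_range {M : Type*} [CommMonoid M] (f : ℕ → M) (a b : ℕ) :
    ∏ m ∈ Finset.Icc a b, f m = ∏ j ∈ Finset.range (b + 1 - a), f (a + j) := by
  rw [← Finset.Ico_add_one_right_eq_Icc, Finset.prod_Ico_eq_prod_range]

lemma prod_neg_eq {s : Finset ℕ} (f : ℕ → ℂ) :
    ∏ m ∈ s, (-(f m)) = (-1) ^ s.card * ∏ m ∈ s, f m := by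
  rw [Finset.prod_congr rfl (fun m _ => neg_eq_neg_one_mul (f m)), Finset.prod_mul_distrib,
    Finset.prod_const]

noncomputable def Pp (n : ℕ) : ℂ[X] :=
  C ((Nat.factorial (n-1) : ℕ) : ℂ) * ∏ m ∈ Finset.Icc 1 (n-1), (C (m:ℂ) - X)

noncomputable def Tl (w : ℂ) (n l : ℕ) : ℂ[X] :=
  C (APm w n l) * (∏ m ∈ (Finset.Icc 1 n).erase l, (X + C (w - m))) *
    ∏ m ∈ Finset.Icc 1 n, (X + C (-w - m))

-- nat product facts
lemma nat_prod_low (a : ℕ) : ∏ m ∈ Finset.Icc 1 a, (a + 1 - m) = Nat.factorial a := by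
  rw [prod_Icc_eq_range]
  simp only [Nat.add_sub_cancel]
  have h : ∀ j ∈ Finset.range a, a + 1 - (1 + j) = (fun j => j + 1) (a - 1 - j) := by
    intro j hj
    simp only [Finset.mem_range] at hj
    show a + 1 - (1 + j) = (a - 1 - j) + 1
    omega
  rw [Finset.prod_congr rfl h, Finset.prod_range_reflect (fun j => j + 1) a,
    Finset.prod_range_add_one_eq_factorial]

lemma nat_prod_high (l n : ℕ) : ∏ m ∈ Finset.Icc (l+1) n, (m - l) = Nat.factorial (n - l) := by
  rw [prod_Icc_eq_range]
  have h : ∀ j ∈ Finset.range (n + 1 - (l+1)), l + 1 + j - l = j + 1 := by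
    intro j hj; omega
  rw [Finset.prod_congr rfl h, Finset.prod_range_add_one_eq_factorial]
  congr 1; omega

lemma prod_erase_lin (n l : ℕ) (hl : l ∈ Finset.Icc 1 n) :
    ∏ m ∈ (Finset.Icc 1 n).erase l, ((l:ℂ) - m)
      = (-1)^(n-l) * ((Nat.factorial (l-1) * Nat.factorial (n-l) : ℕ) : ℂ) := by
  simp only [Finset.mem_Icc] at hl
  have hsplit : (Finset.Icc 1 n).erase l = Finset.Icc 1 (l-1) ∪ Finset.Icc (l+1) n := by
    ext m
    simp only [Finset.mem_erase, Finset.mem_Icc, Finset.mem_union]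
    omega
  have hdisj : Disjoint (Finset.Icc 1 (l-1)) (Finset.Icc (l+1) n) := by
    simp only [Finset.disjoint_left, Finset.mem_Icc]
    intro m h1 h2
    omega
  rw [hsplit, Finset.prod_union hdisj]
  have hA : ∏ m ∈ Finset.Icc 1 (l-1), ((l:ℂ) - m) = ((Nat.factorial (l-1) : ℕ) : ℂ) := by
    have h1 : ∀ m ∈ Finset.Icc 1 (l-1), ((l:ℂ) - m) = (((l - m : ℕ)) : ℂ) := by
      intro m hm
      simp only [Finset.mem_Icc] at hm
      rw [Nat.cast_sub (by omega)]
    rw [Finset.prod_congr rfl h1, ← Nat.cast_prod]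
    congr 1
    have := nat_prod_low (l-1)
    rw [show l - 1 + 1 = l by omega] at this
    rw [this]
  have hB : ∏ m ∈ Finset.Icc (l+1) n, ((l:ℂ) - m)
      = (-1)^(n-l) * ((Nat.factorial (n-l) : ℕ) : ℂ) := by
    have h1 : ∀ m ∈ Finset.Icc (l+1) n, ((l:ℂ) - m) = -(((m - l : ℕ)) : ℂ) := by
      intro m hm
      simp only [Finset.mem_Icc] at hm
      rw [Nat.cast_sub (by omega)]
      ring
    rw [Finset.prod_congr rfl h1, prod_neg_eq, ← Nat.cast_prod, nat_prod_high, Nat.card_Icc,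
      show n + 1 - (l+1) = n - l from by omega]
  rw [hA, hB]
  push_cast
  ring

lemma prod_Icc_shift (n l : ℕ) (w : ℂ) :
    ∏ m ∈ Finset.Icc 1 n, ((l:ℂ) - 2*w - m) = (-1)^n * ∏ j ∈ Finset.range n, (2*w - l + (j+1)) := by
  rw [prod_Icc_eq_range]
  simp only [Nat.add_sub_cancel]
  have h : ∀ j : ℕ, ((l:ℂ) - 2*w - ((1+j : ℕ) : ℂ)) = -((2*w - l + ((j:ℂ)+1))) := by
    intro j; push_cast; ring
  rw [Finset.prod_congr rfl (fun j _ => h j), prod_neg_eq, Finset.card_range]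

lemma eval_Tl_self (w : ℂ) (n l : ℕ) (hl : l ∈ Finset.Icc 1 n)
    (hw : ∀ j ∈ Finset.Icc 1 n, 2*w - (l:ℂ) + j ≠ 0) :
    eval ((l:ℂ) - w) (Tl w n l)
      = ((Nat.factorial (n-1) : ℕ) : ℂ) * ∏ j ∈ Finset.range (n-1), (w - l + ((j:ℂ)+1)) := by
  have hlm := Finset.mem_Icc.1 hl
  have hD : ∏ j ∈ Finset.range n, (2 * w - (l:ℂ) + ((j:ℂ) + 1)) ≠ 0 := by
    refine Finset.prod_ne_zero_iff.2 fun j hj => ?_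
    have := hw (j+1) (Finset.mem_Icc.2 ⟨by omega, by simpa using Finset.mem_range.1 hj⟩)
    intro h
    apply this
    push_cast
    linear_combination h
  simp only [Tl, eval_mul, eval_C, eval_prod, eval_add, eval_X]
  have e1 : ∏ m ∈ (Finset.Icc 1 n).erase l, ((l:ℂ) - w + (w - m))
      = ∏ m ∈ (Finset.Icc 1 n).erase l, ((l:ℂ) - m) :=
    Finset.prod_congr rfl fun m _ => by ring
  have e2 : ∏ m ∈ Finset.Icc 1 n, ((l:ℂ) - w + (-w - m))
      = ∏ m ∈ Finset.Icc 1 n, ((l:ℂ) - 2*w - m) :=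
    Finset.prod_congr rfl fun m _ => by ring
  rw [e1, e2, prod_erase_lin n l hl, prod_Icc_shift n l w, APm]
  have hfac : (((n - 1).choose (l - 1)) : ℂ) * ((Nat.factorial (l-1) * Nat.factorial (n-l) : ℕ) : ℂ)
      = ((Nat.factorial (n-1) : ℕ) : ℂ) := by
    have h1 : l - 1 ≤ n - 1 := by omega
    have := Nat.choose_mul_factorial_mul_factorial h1
    rw [show n - 1 - (l - 1) = n - l from by omega] at this
    push_cast [← this]
    ring
  have hpow : ((-1 : ℂ))^(l + ((n-l) + n)) = 1 := by
    rw [show l + ((n-l) + n) = 2*n from by omega, pow_mul]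
    norm_num
  calc ((-1:ℂ)) ^ l * ((n - 1).choose (l - 1) : ℂ) *
        (∏ j ∈ Finset.range (n - 1), (w - (l:ℂ) + ((j:ℂ) + 1))) /
        (∏ j ∈ Finset.range n, (2 * w - (l:ℂ) + ((j:ℂ) + 1))) *
        ((-1)^(n-l) * ((Nat.factorial (l-1) * Nat.factorial (n-l) : ℕ) : ℂ)) *
        ((-1)^n * ∏ j ∈ Finset.range n, (2*w - (l:ℂ) + ((j:ℂ)+1)))
      = (((n - 1).choose (l - 1) : ℂ) * ((Nat.factorial (l-1) * Nat.factorial (n-l) : ℕ) : ℂ)) *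
        ((-1 : ℂ))^(l + ((n-l) + n)) *
        (∏ j ∈ Finset.range (n - 1), (w - (l:ℂ) + ((j:ℂ) + 1))) *
        ((∏ j ∈ Finset.range n, (2 * w - (l:ℂ) + ((j:ℂ) + 1))) *
          (∏ j ∈ Finset.range n, (2 * w - (l:ℂ) + ((j:ℂ) + 1)))⁻¹) := by
        rw [pow_add, pow_add]
        field_simp
    _ = ((Nat.factorial (n-1) : ℕ) : ℂ) * ∏ j ∈ Finset.range (n-1), (w - l + ((j:ℂ)+1)) := by
        rw [mul_inv_cancel₀ hD, hfac, hpow]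
        ring

lemma eval_Tl_zero_other (w w' : ℂ) (n m l : ℕ) (hl : l ∈ Finset.Icc 1 n)
    (hww' : w' = -w) : eval ((l:ℂ) - w) (Tl w' n m) = 0 := by
  simp only [Tl, eval_mul, eval_C, eval_prod, eval_add, eval_X]
  have : ∏ k ∈ Finset.Icc 1 n, ((l:ℂ) - w + (-w' - k)) = 0 := by
    apply Finset.prod_eq_zero hl
    rw [hww']
    ring
  rw [this]
  ring

lemma eval_Tl_zero_ne (w : ℂ) (n m l : ℕ) (hl : l ∈ Finset.Icc 1 n) (hml : m ≠ l) :
    eval ((l:ℂ) - w) (Tl w n m) = 0 := by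
  simp only [Tl, eval_mul, eval_C, eval_prod, eval_add, eval_X]
  have : ∏ k ∈ (Finset.Icc 1 n).erase m, ((l:ℂ) - w + (w - k)) = 0 := by
    apply Finset.prod_eq_zero (Finset.mem_erase.2 ⟨fun h => hml h.symm, hl⟩)
    ring
  rw [this]
  ring

lemma eval_Pp_at (n l : ℕ) (w : ℂ) :
    eval ((l:ℂ) - w) (Pp n)
      = ((Nat.factorial (n-1) : ℕ) : ℂ) * ∏ j ∈ Finset.range (n-1), (w - l + ((j:ℂ)+1)) := by
  simp only [Pp, eval_mul, eval_C, eval_prod, eval_sub, eval_X]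
  congr 1
  rw [prod_Icc_eq_range]
  simp only [Nat.add_sub_cancel]
  exact Finset.prod_congr rfl fun j _ => by push_cast; ring

lemma natDegree_Tl_le (w : ℂ) (n l : ℕ) (hl : l ∈ Finset.Icc 1 n) (hn : 1 ≤ n) :
    (Tl w n l).natDegree ≤ 2*n - 1 := by
  have h1 : (∏ m ∈ (Finset.Icc 1 n).erase l, (X + C (w - (m:ℂ)))).natDegree ≤ n - 1 := by
    refine le_trans (Polynomial.natDegree_prod_le _ _) ?_
    have : ∀ m ∈ (Finset.Icc 1 n).erase l, (X + C (w - (m:ℂ))).natDegree ≤ 1 := fun m _ =>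
      le_of_eq (natDegree_X_add_C _)
    refine le_trans (Finset.sum_le_card_nsmul _ _ 1 this) ?_
    simp only [smul_eq_mul, mul_one]
    rw [Finset.card_erase_of_mem hl, Nat.card_Icc]
    omega
  have h2 : (∏ m ∈ Finset.Icc 1 n, (X + C (-w - (m:ℂ)))).natDegree ≤ n := by
    refine le_trans (Polynomial.natDegree_prod_le _ _) ?_
    have : ∀ m ∈ Finset.Icc 1 n, (X + C (-w - (m:ℂ))).natDegree ≤ 1 := fun m _ =>
      le_of_eq (natDegree_X_add_C _)
    refine le_trans (Finset.sum_le_card_nsmul _ _ 1 this) ?_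
    simp [Nat.card_Icc]
  calc (Tl w n l).natDegree
      ≤ (C (APm w n l) * ∏ m ∈ (Finset.Icc 1 n).erase l, (X + C (w - (m:ℂ)))).natDegree
        + (∏ m ∈ Finset.Icc 1 n, (X + C (-w - (m:ℂ)))).natDegree := natDegree_mul_le
    _ ≤ (n - 1) + n := by
        gcongr
        exact le_trans (natDegree_C_mul_le _ _) h1
    _ ≤ 2*n - 1 := by omega

lemma natDegree_Pp_le (n : ℕ) : (Pp n).natDegree ≤ n - 1 := by
  refine le_trans (natDegree_C_mul_le _ _) ?_
  refine le_trans (Polynomial.natDegree_prod_le _ _) ?_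
  have : ∀ m ∈ Finset.Icc 1 (n-1), (C ((m:ℕ):ℂ) - X).natDegree ≤ 1 := by
    intro m _
    rw [show C ((m:ℕ):ℂ) - X = -(X - C ((m:ℕ):ℂ)) from by ring, natDegree_neg, natDegree_X_sub_C]
  refine le_trans (Finset.sum_le_card_nsmul _ _ 1 this) ?_
  simp [Nat.card_Icc]

lemma poly_key (z : ℂ) (n : ℕ) (hn : 1 ≤ n)
    (hA : ∀ l ∈ Finset.Icc 1 n, ∀ j ∈ Finset.Icc 1 n,
      2 * z - (l : ℂ) + (j : ℂ) ≠ 0 ∧ -(2 * z) - (l : ℂ) + (j : ℂ) ≠ 0) :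
    Pp n = ∑ l ∈ Finset.Icc 1 n, (Tl z n l + Tl (-z) n l) := by
  set Q : ℂ[X] := ∑ l ∈ Finset.Icc 1 n, (Tl z n l + Tl (-z) n l) with hQ
  -- eval equality at the 2n points
  have key : ∀ l ∈ Finset.Icc 1 n, ∀ w : ℂ, (w = z ∨ w = -z) →
      eval ((l:ℂ) - w) Q = eval ((l:ℂ) - w) (Pp n) := by
    intro l hl w hw
    have hwcond : ∀ j ∈ Finset.Icc 1 n, 2*w - (l:ℂ) + j ≠ 0 := by
      intro j hj
      rcases hw with rfl | rfl
      · exact (hA l hl j hj).1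
      · intro h
        exact (hA l hl j hj).2 (by linear_combination h)
    rw [hQ, eval_finset_sum, Finset.sum_eq_single l ?h1 ?h2]
    case h1 =>
      intro m hm hml
      rcases hw with rfl | rfl
      · rw [eval_add, eval_Tl_zero_ne _ _ _ _ hl hml, eval_Tl_zero_other w (-w) n m l hl rfl]
        ring
      · rw [eval_add, eval_Tl_zero_other (-z) z n m l hl (by ring),
          eval_Tl_zero_ne _ _ _ _ hl hml]
        ring
    case h2 => intro h; exact absurd hl h
    rcases hw with rfl | rfl
    · rw [eval_add, eval_Tl_self w n l hl hwcond, eval_Tl_zero_other w (-w) n l l hl rfl,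
        eval_Pp_at]
      ring
    · rw [eval_add, eval_Tl_self (-z) n l hl hwcond, eval_Tl_zero_other (-z) z n l l hl (by ring),
        eval_Pp_at]
      ring
  -- the difference vanishes
  have hsub : Q - Pp n = 0 := by
    apply Polynomial.eq_zero_of_natDegree_lt_card_of_eval_eq_zero (Q - Pp n)
      (f := Sum.elim (fun i : Fin n => ((i:ℕ) + 1 : ℂ) - z) (fun i : Fin n => ((i:ℕ) + 1 : ℂ) + z))
    · -- injectivity
      have hmem : ∀ i : Fin n, (i:ℕ) + 1 ∈ Finset.Icc 1 n := fun i =>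
        Finset.mem_Icc.2 ⟨by omega, by omega⟩
      rintro (i | i) (j | j) h
      · simp only [Sum.elim_inl] at h
        have : ((i:ℕ) : ℂ) = ((j:ℕ) : ℂ) := by linear_combination h
        have := Nat.cast_injective (R := ℂ) this
        simpa [Fin.ext_iff] using this
      · simp only [Sum.elim_inl, Sum.elim_inr] at h
        exfalso
        refine (hA ((i:ℕ)+1) (hmem i) ((j:ℕ)+1) (hmem j)).1 ?_
        push_cast
        linear_combination -h
      · simp only [Sum.elim_inl, Sum.elim_inr] at h
        exfalso
        refine (hA ((j:ℕ)+1) (hmem j) ((i:ℕ)+1) (hmem i)).1 ?_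
        push_cast
        linear_combination h
      · simp only [Sum.elim_inr] at h
        have : ((i:ℕ) : ℂ) = ((j:ℕ) : ℂ) := by linear_combination h
        have := Nat.cast_injective (R := ℂ) this
        simpa [Fin.ext_iff] using this
    · -- evaluation
      rintro (i | i)
      · simp only [Sum.elim_inl, eval_sub]
        have hmem : (i:ℕ) + 1 ∈ Finset.Icc 1 n := Finset.mem_Icc.2 ⟨by omega, by omega⟩
        have := key ((i:ℕ)+1) hmem z (Or.inl rfl)
        push_cast at this ⊢
        rw [this]
        ring
      · simp only [Sum.elim_inr, eval_sub]
        have hmem : (i:ℕ) + 1 ∈ Finset.Icc 1 n := Finset.mem_Icc.2 ⟨by omega, by omega⟩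
        have := key ((i:ℕ)+1) hmem (-z) (Or.inr rfl)
        push_cast at this ⊢
        rw [show ((i:ℕ) : ℂ) + 1 + z = ((i:ℕ) : ℂ) + 1 - -z from by ring, this]
        ring
    · -- degree bound
      have hQd : Q.natDegree ≤ 2*n - 1 := by
        apply Polynomial.natDegree_sum_le_of_forall_le
        intro l hl
        refine le_trans (Polynomial.natDegree_add_le _ _) ?_
        exact max_le (natDegree_Tl_le z n l hl hn) (natDegree_Tl_le (-z) n l hl hn)
      have hPd : (Pp n).natDegree ≤ 2*n - 1 := le_trans (natDegree_Pp_le n) (by omega)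
      refine lt_of_le_of_lt (le_trans (Polynomial.natDegree_sub_le _ _) (max_le hQd hPd)) ?_
      simp only [Fintype.card_sum, Fintype.card_fin]
      omega
  have := sub_eq_zero.mp hsub
  exact this.symm

-- Gamma shift
lemma gamma_shift (s : ℂ) (n : ℕ) (h : ∀ k ∈ Finset.range n, s + k ≠ 0) :
    Gamma (s + n) = Gamma s * ∏ k ∈ Finset.range n, (s + k) := by
  induction n with
  | zero => simp
  | succ m ih =>
    have h1 : s + m ≠ 0 := h m (by simp)
    have : (s + (m+1 : ℕ) : ℂ) = (s + m) + 1 := by push_cast; ring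
    rw [this, Complex.Gamma_add_one _ h1, ih (fun k hk => h k (by simp at hk ⊢; omega)),
      Finset.prod_range_succ]
    ring

lemma aCoef_eq_ratio (x z : ℂ) (n : ℕ) (hn : 1 ≤ n)
    (hx : ∀ m : ℕ, x ≠ (m + 1 : ℂ) ∧ x + z ≠ (m + 1 : ℂ) ∧ x - z ≠ (m + 1 : ℂ)) :
    aCoef x z n = ((Nat.factorial (n-1)) : ℂ) * (∏ m ∈ Finset.Icc 1 (n-1), ((m:ℂ) - x)) /
      ((∏ m ∈ Finset.Icc 1 n, (x + z - m)) * ∏ m ∈ Finset.Icc 1 n, (x - z - m)) := by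
  have hcast : ((n - 1 : ℕ) : ℂ) = (n : ℂ) - 1 := by
    push_cast [Nat.cast_sub hn]; ring
  have hg1 : Complex.Gamma (1 - x) ≠ 0 := by
    apply Complex.Gamma_ne_zero
    intro m h
    exact (hx m).1 (by linear_combination -h)
  have hg2 : Complex.Gamma (1 - x - z) ≠ 0 := by
    apply Complex.Gamma_ne_zero
    intro m h
    exact (hx m).2.1 (by linear_combination -h)
  have hg3 : Complex.Gamma (1 - x + z) ≠ 0 := by
    apply Complex.Gamma_ne_zero
    intro m h
    exact (hx m).2.2 (by linear_combination -h)
  have e0 : Complex.Gamma (n : ℂ) = ((Nat.factorial (n-1)) : ℂ) := by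
    have : ((n : ℕ) : ℂ) = ((n - 1 : ℕ) : ℂ) + 1 := by rw [hcast]; ring
    rw [this, Complex.Gamma_nat_eq_factorial]
  have e1 : Complex.Gamma ((n : ℂ) - x)
      = Complex.Gamma (1 - x) * ∏ k ∈ Finset.range (n-1), ((1 : ℂ) - x + k) := by
    have : ((n:ℂ) - x) = (1 - x) + ((n-1 : ℕ) : ℂ) := by rw [hcast]; ring
    rw [this, gamma_shift]
    intro k _ h
    exact (hx k).1 (by linear_combination -h)
  have e2 : Complex.Gamma (1 - x - z + n)
      = Complex.Gamma (1 - x - z) * ∏ k ∈ Finset.range n, ((1 : ℂ) - x - z + k) := by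
    rw [gamma_shift]
    intro k _ h
    exact (hx k).2.1 (by linear_combination -h)
  have e3 : Complex.Gamma (1 - x + z + n)
      = Complex.Gamma (1 - x + z) * ∏ k ∈ Finset.range n, ((1 : ℂ) - x + z + k) := by
    rw [gamma_shift]
    intro k _ h
    exact (hx k).2.2 (by linear_combination -h)
  have p1 : ∏ m ∈ Finset.Icc 1 (n-1), ((m:ℂ) - x) = ∏ k ∈ Finset.range (n-1), ((1 : ℂ) - x + k) := by
    rw [prod_Icc_eq_range]
    simp only [Nat.add_sub_cancel]
    refine Finset.prod_congr rfl fun k _ => by push_cast; ring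
  have p2 : ∏ m ∈ Finset.Icc 1 n, (x + z - (m:ℂ)) = (-1)^n * ∏ k ∈ Finset.range n, ((1 : ℂ) - x - z + k) := by
    rw [prod_Icc_eq_range]
    simp only [Nat.add_sub_cancel]
    have h' : ∀ k : ℕ, (x + z - ((1+k : ℕ):ℂ)) = -((1:ℂ) - x - z + k) := fun k => by
      push_cast; ring
    rw [Finset.prod_congr rfl (fun k _ => h' k), prod_neg_eq, Finset.card_range]
  have p3 : ∏ m ∈ Finset.Icc 1 n, (x - z - (m:ℂ)) = (-1)^n * ∏ k ∈ Finset.range n, ((1 : ℂ) - x + z + k) := by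
    rw [prod_Icc_eq_range]
    simp only [Nat.add_sub_cancel]
    have h' : ∀ k : ℕ, (x - z - ((1+k : ℕ):ℂ)) = -((1:ℂ) - x + z + k) := fun k => by
      push_cast; ring
    rw [Finset.prod_congr rfl (fun k _ => h' k), prod_neg_eq, Finset.card_range]
  rw [aCoef, e0, e1, e2, e3, p1, p2, p3]
  have hq2 : ∏ k ∈ Finset.range n, ((1 : ℂ) - x - z + k) ≠ 0 := by
    refine Finset.prod_ne_zero_iff.2 fun k _ h => (hx k).2.1 (by linear_combination -h)
  have hq3 : ∏ k ∈ Finset.range n, ((1 : ℂ) - x + z + k) ≠ 0 := by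
    refine Finset.prod_ne_zero_iff.2 fun k _ h => (hx k).2.2 (by linear_combination -h)
  field_simp
  ring_nf
  rw [show ((-1:ℂ))^(n*2) = 1 by rw [mul_comm, pow_mul]; norm_num, mul_one]

open Polynomial in
/-- Partial fraction decomposition:
`aₙ = Σ_{l=1}^n (A_{n,l}^{(+)}/(x+z-l) + A_{n,l}^{(-)}/(x-z-l))`. -/
theorem aCoef_partial_fractions (x z : ℂ) (n : ℕ) (hn : 1 ≤ n)
    (hx : ∀ m : ℕ, x ≠ (m + 1 : ℂ) ∧ x + z ≠ (m + 1 : ℂ) ∧ x - z ≠ (m + 1 : ℂ))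
    (hden : ∀ l ∈ Finset.Icc 1 n, x + z - (l : ℂ) ≠ 0 ∧ x - z - (l : ℂ) ≠ 0)
    (hA : ∀ l ∈ Finset.Icc 1 n, ∀ j ∈ Finset.Icc 1 n,
      2 * z - (l : ℂ) + (j : ℂ) ≠ 0 ∧ -(2 * z) - (l : ℂ) + (j : ℂ) ≠ 0) :
    aCoef x z n = ∑ l ∈ Finset.Icc 1 n,
      (APm z n l / (x + z - (l : ℂ)) + APm (-z) n l / (x - z - (l : ℂ))) := by
  have hnum : eval x (Pp n)
      = ((Nat.factorial (n-1) : ℕ) : ℂ) * ∏ m ∈ Finset.Icc 1 (n-1), ((m:ℂ) - x) := by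
    simp [Pp, eval_prod]
  rw [aCoef_eq_ratio x z n hn hx, ← hnum, poly_key z n hn hA, eval_finset_sum,
    Finset.sum_div]
  refine Finset.sum_congr rfl fun l hl => ?_
  have h1 : x + z - (l:ℂ) ≠ 0 := (hden l hl).1
  have h2 : x - z - (l:ℂ) ≠ 0 := (hden l hl).2
  have hDz0 : (∏ m ∈ Finset.Icc 1 n, (x + z - (m:ℂ))) ≠ 0 :=
    Finset.prod_ne_zero_iff.2 fun m hm => (hden m hm).1
  have hDmz0 : (∏ m ∈ Finset.Icc 1 n, (x - z - (m:ℂ))) ≠ 0 :=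
    Finset.prod_ne_zero_iff.2 fun m hm => (hden m hm).2
  have hEz0 : (∏ m ∈ (Finset.Icc 1 n).erase l, (x + z - (m:ℂ))) ≠ 0 :=
    Finset.prod_ne_zero_iff.2 fun m hm => (hden m (Finset.mem_of_mem_erase hm)).1
  have hEmz0 : (∏ m ∈ (Finset.Icc 1 n).erase l, (x - z - (m:ℂ))) ≠ 0 :=
    Finset.prod_ne_zero_iff.2 fun m hm => (hden m (Finset.mem_of_mem_erase hm)).2
  have hDzf : (∏ m ∈ (Finset.Icc 1 n).erase l, (x + z - (m:ℂ))) * (x + z - (l:ℂ))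
      = ∏ m ∈ Finset.Icc 1 n, (x + z - (m:ℂ)) := Finset.prod_erase_mul _ _ hl
  have hDmzf : (∏ m ∈ (Finset.Icc 1 n).erase l, (x - z - (m:ℂ))) * (x - z - (l:ℂ))
      = ∏ m ∈ Finset.Icc 1 n, (x - z - (m:ℂ)) := Finset.prod_erase_mul _ _ hl
  simp only [Tl, eval_add, eval_mul, eval_C, eval_prod, eval_X]
  have cz : ∀ m : ℕ, x + (z - (m:ℂ)) = x + z - m := fun m => by ring
  have cmz : ∀ m : ℕ, x + (-z - (m:ℂ)) = x - z - m := fun m => by ring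
  have cz2 : ∀ m : ℕ, x + (-(-z) - (m:ℂ)) = x + z - m := fun m => by ring
  rw [Finset.prod_congr rfl (fun m _ => cz m), Finset.prod_congr rfl (fun m _ => cmz m),
    Finset.prod_congr rfl (fun m (_ : m ∈ (Finset.Icc 1 n).erase l) => cmz m),
    Finset.prod_congr rfl (fun m (_ : m ∈ Finset.Icc 1 n) => cz2 m),
    ← hDzf, ← hDmzf]
  field_simp

end Aux
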